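/- Let W be the free ℂ-vector space with basis the set of all partitions. For i ∈ ℤ define linear operators on W by: f_i(λ) = μ if μ is the (unique) partition obtained from λ by adding a box of residue i and f_i(λ) = 0 if none exists; e_i(λ) = ν if ν is the (unique) partition obtained from λ by removing a box of residue i and e_i(λ) = 0 if none exists; h_i(λ) = (δ_{i,0} − 2 v_i(λ) + v_{i−1}(λ) + v_{i+1}(λ))·λ. Then [e_i, f_j] = δ_{ij} h_i, [h_i, e_j] = C_{ij} e_j and [h_i, f_j] = −C_{ij} f_j for all i, j ∈ ℤ, where C_{ij} = 2δ_{ij} − δ_{i−1,j} − δ_{i+1,j} is the A_∞ Cartan matrix. (These are the Chevalley relations underlying the geometric realization of the basic representation of sl_∞ on ⊕_λ H_T^{2|λ|}(𝔐(v^λ)), with the empty partition as highest weight vector.) -/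

import Mathlib

/-- A partition: a non-increasing, eventually-zero sequence of non-negative integers.
`part k` is the `(k+1)`-st part `λ_{k+1}`. -/
structure PartitionSeq : Type where
  part : ℕ → ℕ
  mono : ∀ k, part (k + 1) ≤ part k
  ev_zero : ∃ N : ℕ, ∀ k, N ≤ k → part k = 0

namespace PartitionSeq

/-- The Young diagram of a partition: the box `b = (j, k)` in column `j ≥ 0` and row
`k ≥ 0` belongs to the diagram iff `j < λ_{k+1}`. -/
def diagram (lam : PartitionSeq) : Set (ℕ × ℕ) := {b | b.1 < lam.part b.2}

/-- The size `|λ| = Σ_i λ_i` of a partition. -/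
noncomputable def size (lam : PartitionSeq) : ℕ := ∑ᶠ k : ℕ, lam.part k

end PartitionSeq

/-- The residue `j - k` of the box `b = (j, k)`. -/
def boxResidue (b : ℕ × ℕ) : ℤ := (b.1 : ℤ) - (b.2 : ℤ)

/-- `v_i(λ)`: the number of boxes of the Young diagram of `λ` of residue `i`. -/
noncomputable def boxCount (lam : PartitionSeq) (i : ℤ) : ℕ :=
  {b ∈ lam.diagram | boxResidue b = i}.ncard

/-- The free `ℂ`-vector space with basis the set of all partitions (the underlying space
of `⊕_λ H_T^{2|λ|}(𝔐(v^λ))`). -/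
abbrev PartSpace : Type := PartitionSeq →₀ ℂ

open Classical in
/-- `f_i`: box addition. `f_i(λ) = μ` if `μ` is the (unique) partition obtained from `λ`
by adding a box of residue `i`, and `f_i(λ) = 0` if no such partition exists. -/
noncomputable def fOp (i : ℤ) : PartSpace →ₗ[ℂ] PartSpace :=
  Finsupp.lift PartSpace ℂ PartitionSeq fun lam =>
    if h : ∃ mu : PartitionSeq, ∃ b : ℕ × ℕ,
        boxResidue b = i ∧ b ∉ lam.diagram ∧ mu.diagram = lam.diagram ∪ {b} then
      Finsupp.single h.choose 1
    else 0

open Classical in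
/-- `e_i`: box removal. `e_i(λ) = ν` if `ν` is the (unique) partition obtained from `λ`
by removing a box of residue `i`, and `e_i(λ) = 0` if no such partition exists. -/
noncomputable def eOp (i : ℤ) : PartSpace →ₗ[ℂ] PartSpace :=
  Finsupp.lift PartSpace ℂ PartitionSeq fun lam =>
    if h : ∃ mu : PartitionSeq, ∃ b : ℕ × ℕ,
        boxResidue b = i ∧ b ∈ lam.diagram ∧ mu.diagram = lam.diagram \ {b} then
      Finsupp.single h.choose 1
    else 0

/-- `h_i`: the diagonal operator
`h_i(λ) = (δ_{i,0} − 2v_i(λ) + v_{i−1}(λ) + v_{i+1}(λ)) λ`. -/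
noncomputable def hOp (i : ℤ) : PartSpace →ₗ[ℂ] PartSpace :=
  Finsupp.lift PartSpace ℂ PartitionSeq fun lam =>
    ((((if i = 0 then 1 else 0) - 2 * (boxCount lam i : ℤ)
        + (boxCount lam (i - 1) : ℤ) + (boxCount lam (i + 1) : ℤ) : ℤ) : ℂ)) •
      Finsupp.single lam 1

/-- The `A_∞` Cartan matrix `C_{ij} = 2δ_{ij} − δ_{i−1,j} − δ_{i+1,j}`. -/
def cartanAInf (i j : ℤ) : ℤ :=
  (if i = j then 2 else 0) - (if i - 1 = j then 1 else 0) - (if i + 1 = j then 1 else 0)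

/-!
Encode a partition `λ` by `E_λ(i) = #{k | k + i < λ_k}` (`rowsReaching`), the number of rows
whose last box has residue `≥ i`. The function `E_λ` determines `λ`, it decreases in steps
`E_λ(i) - E_λ(i+1) ∈ {0, 1}`, and adding a box of residue `i` raises it by one at `i` only. Hence
a box of residue `i` is addable (removable) exactly when the steps at `i - 1, i` are `(1, 0)`
(resp. `(0, 1)`), and since `v_i(λ) = E_λ(i) - max(0, -i)` the eigenvalue of `h_i` on `λ` is the
second difference `E_λ(i-1) + E_λ(i+1) - 2 E_λ(i)`, which is `[i addable] - [i removable]`.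

Viewing `f_i` and `e_i` as the linearizations of the partial bijection "add a box of residue `i`"
and of its inverse, `[e_i, f_i] = h_i` is then the commutator of a partial bijection with its
inverse, `[h_i, e_j]` and `[h_i, f_j]` come from the change of the second difference, and for
`i ≠ j` the two partial bijections commute because both composites are described by the same
conditions on `E_λ`.
-/

open Function

section RelOp

variable {K α : Type*} [CommRing K] {R S : α → α → Prop}

variable (K) in
open Classical in
noncomputable def relOp (R : α → α → Prop) : (α →₀ K) →ₗ[K] (α →₀ K) :=
  Finsupp.lift (α →₀ K) K α fun a => if h : ∃ b, R a b then Finsupp.single h.choose 1 else 0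

noncomputable def diagOp (d : α → K) : (α →₀ K) →ₗ[K] (α →₀ K) :=
  Finsupp.lift (α →₀ K) K α fun a => d a • Finsupp.single a 1

lemma relOp_single (hR : Relator.RightUnique R) {a b : α} (h : R a b) :
    relOp K R (Finsupp.single a 1) = Finsupp.single b 1 := by
  have hex : ∃ b, R a b := ⟨b, h⟩
  simp only [relOp, Finsupp.lift_apply, Finsupp.sum_single_index, zero_smul, one_smul]
  rw [dif_pos hex, hR hex.choose_spec h]

lemma relOp_single_eq_zero {a : α} (h : ¬∃ b, R a b) :
    relOp K R (Finsupp.single a 1) = 0 := by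
  simp only [relOp, Finsupp.lift_apply, Finsupp.sum_single_index, zero_smul, one_smul]
  rw [dif_neg h]

lemma diagOp_single (d : α → K) (a : α) :
    diagOp d (Finsupp.single a 1) = d a • Finsupp.single a 1 := by
  simp only [diagOp, Finsupp.lift_apply, Finsupp.sum_single_index, zero_smul, one_smul]

lemma relOp_comp_relOp (hR : Relator.RightUnique R) (hS : Relator.RightUnique S) :
    relOp K S ∘ₗ relOp K R = relOp K (Relation.Comp R S) := by
  have hRS : Relator.RightUnique (Relation.Comp R S) := by
    rintro a c c' ⟨b, hab, hbc⟩ ⟨b', hab', hbc'⟩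
    exact hS hbc (hR hab' hab ▸ hbc')
  ext a : 2
  simp only [LinearMap.comp_apply, Finsupp.lsingle_apply]
  by_cases hab : ∃ b, R a b
  · obtain ⟨b, hab⟩ := hab
    rw [relOp_single hR hab]
    by_cases hbc : ∃ c, S b c
    · obtain ⟨c, hbc⟩ := hbc
      rw [relOp_single hS hbc, relOp_single hRS ⟨b, hab, hbc⟩]
    · rw [relOp_single_eq_zero hbc, relOp_single_eq_zero]
      rintro ⟨c, b', hab', hb'c⟩
      exact hbc ⟨c, hR hab' hab ▸ hb'c⟩
  · rw [relOp_single_eq_zero hab, map_zero, relOp_single_eq_zero]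
    rintro ⟨c, b, hab', -⟩
    exact hab ⟨b, hab'⟩

open Classical in
lemma relOp_comp_relOp_single_of_flip_eq (hR : Relator.RightUnique R)
    (hS : Relator.RightUnique S) (hRS : flip R = S) (a : α) :
    relOp K S (relOp K R (Finsupp.single a 1)) =
      if ∃ b, R a b then Finsupp.single a 1 else 0 := by
  subst hRS
  split_ifs with h
  · obtain ⟨b, hab⟩ := h
    rw [relOp_single hR hab, relOp_single hS (show flip R b a from hab)]
  · rw [relOp_single_eq_zero h, map_zero]

open Classical in
lemma relOp_flip_comp_sub_comp_flip (hL : Relator.LeftUnique R) (hR : Relator.RightUnique R) :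
    relOp K (flip R) ∘ₗ relOp K R - relOp K R ∘ₗ relOp K (flip R) =
      diagOp fun a => (if ∃ b, R a b then 1 else 0) - (if ∃ b, R b a then 1 else 0) := by
  ext a : 2
  have hef := relOp_comp_relOp_single_of_flip_eq (K := K) hR hL.flip rfl a
  have hfe : relOp K R (relOp K (flip R) (Finsupp.single a 1)) =
      if ∃ b, R b a then Finsupp.single a 1 else 0 :=
    relOp_comp_relOp_single_of_flip_eq hL.flip hR rfl a
  simp only [LinearMap.sub_apply, LinearMap.comp_apply, Finsupp.lsingle_apply, diagOp_single,
    hef, hfe]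
  split_ifs <;> simp

lemma diagOp_comp_relOp_sub (hR : Relator.RightUnique R) {d : α → K} {c : K}
    (hd : ∀ a b, R a b → d b - d a = c) :
    diagOp d ∘ₗ relOp K R - relOp K R ∘ₗ diagOp d = c • relOp K R := by
  ext a : 2
  simp only [LinearMap.sub_apply, LinearMap.comp_apply, LinearMap.smul_apply,
    Finsupp.lsingle_apply, diagOp_single, map_smul]
  by_cases h : ∃ b, R a b
  · obtain ⟨b, hab⟩ := h
    rw [relOp_single hR hab, diagOp_single, ← sub_smul, hd a b hab]
  · rw [relOp_single_eq_zero h, map_zero, smul_zero, smul_zero, sub_zero]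

end RelOp

namespace PartitionSeq

@[ext]
theorem ext {lam mu : PartitionSeq} (h : lam.part = mu.part) : lam = mu := by
  cases lam; cases mu; cases h; rfl

lemma part_antitone (lam : PartitionSeq) : Antitone lam.part :=
  antitone_nat_of_succ_le lam.mono

lemma exists_part_eq_update (lam : PartitionSeq) {k n : ℕ}
    (hlow : lam.part (k + 1) ≤ n) (hhigh : 0 < k → n ≤ lam.part (k - 1)) :
    ∃ mu : PartitionSeq, mu.part = update lam.part k n := by
  obtain ⟨N, hN⟩ := lam.ev_zero
  refine ⟨⟨update lam.part k n, fun m => ?_, N + k + 1, fun m hm => ?_⟩, rfl⟩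
  · have := lam.mono m
    rcases eq_or_ne m k with rfl | hmk
    · simp [hlow]
    rcases eq_or_ne (m + 1) k with rfl | hmk'
    · simpa using hhigh (Nat.succ_pos m)
    · simp [update_of_ne hmk, update_of_ne hmk', this]
  · rw [update_of_ne (by omega)]
    exact hN m (by omega)

noncomputable def rowsReaching (lam : PartitionSeq) (i : ℤ) : ℕ :=
  {k : ℕ | (k : ℤ) + i < lam.part k}.ncard

lemma setOf_lt_part_eq_Iio (lam : PartitionSeq) (i : ℤ) :
    {k : ℕ | (k : ℤ) + i < lam.part k} = Set.Iio (lam.rowsReaching i) := by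
  have hex : ∃ n : ℕ, ¬(n : ℤ) + i < lam.part n := by
    obtain ⟨N, hN⟩ := lam.ev_zero
    exact ⟨N + (-i).toNat, by rw [hN _ (Nat.le_add_right _ _)]; omega⟩
  have hS : {k : ℕ | (k : ℤ) + i < lam.part k} = Set.Iio (Nat.find hex) := by
    ext k
    refine ⟨fun hk => ?_, fun hk => not_not.mp (Nat.find_min hex hk)⟩
    by_contra hge
    have hnk : Nat.find hex ≤ k := not_lt.mp hge
    have := lam.part_antitone hnk
    have := Nat.find_spec hex
    have : (k : ℤ) + i < lam.part k := hk
    omega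
  rw [rowsReaching, hS, Set.ncard_Iio_nat]

lemma lt_rowsReaching_iff (lam : PartitionSeq) (i : ℤ) (k : ℕ) :
    k < lam.rowsReaching i ↔ (k : ℤ) + i < lam.part k := by
  rw [← Set.mem_Iio, ← setOf_lt_part_eq_Iio]
  rfl

lemma rowsReaching_add_one_le_and_le (lam : PartitionSeq) (i : ℤ) :
    lam.rowsReaching (i + 1) ≤ lam.rowsReaching i ∧
      lam.rowsReaching i ≤ lam.rowsReaching (i + 1) + 1 := by
  refine ⟨le_of_forall_lt fun k hk => ?_, le_of_forall_lt fun k hk => ?_⟩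
  · rw [lt_rowsReaching_iff] at hk ⊢
    omega
  · rcases k with _ | k
    · omega
    · rw [lt_rowsReaching_iff] at hk
      have := lam.mono k
      have : k < lam.rowsReaching (i + 1) := by
        rw [lt_rowsReaching_iff]
        push_cast at hk
        omega
      omega

lemma rowsReaching_le_sub_one_and_le (lam : PartitionSeq) (i : ℤ) :
    lam.rowsReaching i ≤ lam.rowsReaching (i - 1) ∧
      lam.rowsReaching (i - 1) ≤ lam.rowsReaching i + 1 := by
  simpa using lam.rowsReaching_add_one_le_and_le (i - 1)

lemma rowsReaching_injective : Injective rowsReaching := by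
  intro lam mu h
  ext k
  refine eq_of_forall_lt_iff fun x => ?_
  have key (nu : PartitionSeq) : x < nu.part k ↔ k < nu.rowsReaching ((x : ℤ) - k) := by
    rw [lt_rowsReaching_iff]
    omega
  rw [key, key, h]

lemma toNat_neg_le_rowsReaching (lam : PartitionSeq) (i : ℤ) :
    (-i).toNat ≤ lam.rowsReaching i :=
  le_of_forall_lt fun k hk => by
    rw [lt_rowsReaching_iff]
    omega

lemma boxCount_add_toNat_neg (lam : PartitionSeq) (i : ℤ) :
    boxCount lam i + (-i).toNat = lam.rowsReaching i := by
  have hboxes : {b ∈ lam.diagram | boxResidue b = i} =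
      (fun k : ℕ => (((k : ℤ) + i).toNat, k)) '' Set.Ico (-i).toNat (lam.rowsReaching i) := by
    ext ⟨j, k⟩
    simp only [diagram, boxResidue, Set.mem_ofPred_eq, Set.mem_image, Set.mem_Ico,
      Prod.mk.injEq, lt_rowsReaching_iff]
    constructor
    · rintro ⟨hj, rfl⟩
      exact ⟨k, ⟨by omega, by omega⟩, by omega, rfl⟩
    · rintro ⟨k, ⟨hk, hk'⟩, rfl, rfl⟩
      omega
  rw [boxCount, hboxes, Set.ncard_image_of_injective _ fun k k' h => congrArg Prod.snd h,
    Set.ncard_Ico_nat]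
  have := lam.toNat_neg_le_rowsReaching i
  omega

end PartitionSeq

open PartitionSeq

def IsBoxAddition (i : ℤ) (lam mu : PartitionSeq) : Prop :=
  ∃ b : ℕ × ℕ, boxResidue b = i ∧ b ∉ lam.diagram ∧ mu.diagram = lam.diagram ∪ {b}

lemma isBoxAddition_iff {i : ℤ} {lam mu : PartitionSeq} :
    IsBoxAddition i lam mu ↔
      ∃ k, (lam.part k : ℤ) = k + i ∧ mu.part = update lam.part k (lam.part k + 1) := by
  constructor
  · rintro ⟨⟨j, k⟩, hres, hnot, hdiag⟩
    have hmem (x y : ℕ) : x < mu.part y ↔ (x = j ∧ y = k) ∨ x < lam.part y := by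
      simpa [diagram] using Set.ext_iff.1 hdiag (x, y)
    have hnot : ¬j < lam.part k := hnot
    have hrow : lam.part k = j ∧ mu.part k = j + 1 := by
      have hmem' (x : ℕ) : x < mu.part k ↔ x = j ∨ x < lam.part k := by simpa using hmem x k
      have := hmem' j
      have := hmem' (lam.part k)
      have := hmem' (mu.part k)
      have := hmem' (j + 1)
      omega
    refine ⟨k, by simp only [boxResidue] at hres; omega, funext fun y => ?_⟩
    rcases eq_or_ne y k with rfl | hy
    · simp [hrow]
    · rw [update_of_ne hy]
      exact eq_of_forall_lt_iff fun x => by simpa [hy] using hmem x y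
  · rintro ⟨k, hk, hmu⟩
    refine ⟨(lam.part k, k), by simp only [boxResidue]; omega, by simp [diagram], ?_⟩
    ext ⟨x, y⟩
    simp only [diagram, hmu, update_apply, Set.mem_union, Set.mem_singleton_iff, Prod.mk.injEq,
      Set.mem_ofPred_eq]
    split_ifs with hy
    · subst hy
      omega
    · simp [hy]

lemma IsBoxAddition.rowsReaching_eq {i : ℤ} {lam mu : PartitionSeq} (h : IsBoxAddition i lam mu)
    (l : ℤ) : mu.rowsReaching l = lam.rowsReaching l + if l = i then 1 else 0 := by
  obtain ⟨k, hk, hmu⟩ := isBoxAddition_iff.1 h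
  have hrow (k' : ℕ) :
      (k' : ℤ) + l < mu.part k' ↔ (k' : ℤ) + l < lam.part k' ∨ (l = i ∧ k' = k) := by
    rw [hmu]
    rcases eq_or_ne k' k with rfl | hne
    · simp only [update_self, and_true]
      omega
    · simp [hne]
  unfold rowsReaching
  split_ifs with hl
  · have hins : {k' : ℕ | (k' : ℤ) + l < mu.part k'} =
        insert k {k' : ℕ | (k' : ℤ) + l < lam.part k'} := by
      ext k'
      subst hl
      simp only [Set.mem_insert_iff, Set.mem_ofPred_eq, hrow, true_and]
      tauto
    rw [hins, Set.ncard_insert_of_notMem (by simp only [Set.mem_ofPred_eq]; omega)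
      (by rw [setOf_lt_part_eq_Iio]; exact Set.finite_Iio _)]
  · simp only [hrow, hl, false_and, or_false, add_zero]

lemma isBoxAddition_rightUnique (i : ℤ) : Relator.RightUnique (IsBoxAddition i) :=
  fun _ _ _ h h' => rowsReaching_injective <| funext fun l => by
    rw [h.rowsReaching_eq, h'.rowsReaching_eq]

lemma isBoxAddition_leftUnique (i : ℤ) : Relator.LeftUnique (IsBoxAddition i) :=
  fun _ _ _ h h' => rowsReaching_injective <| funext fun l => by
    have := h.rowsReaching_eq l
    have := h'.rowsReaching_eq l
    omega

lemma IsBoxAddition.rowsReaching_steps {i : ℤ} {lam mu : PartitionSeq}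
    (h : IsBoxAddition i lam mu) :
    (lam.rowsReaching (i - 1) = lam.rowsReaching i + 1 ∧
        lam.rowsReaching (i + 1) = lam.rowsReaching i) ∧
      (mu.rowsReaching (i - 1) = mu.rowsReaching i ∧
        mu.rowsReaching (i + 1) + 1 = mu.rowsReaching i) := by
  have hprev := h.rowsReaching_eq (i - 1)
  have hcur := h.rowsReaching_eq i
  have hnext := h.rowsReaching_eq (i + 1)
  simp only [sub_eq_self, add_eq_left, one_ne_zero, if_true, if_false] at hprev hcur hnext
  have := lam.rowsReaching_add_one_le_and_le i
  have := lam.rowsReaching_le_sub_one_and_le i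
  have := mu.rowsReaching_add_one_le_and_le i
  have := mu.rowsReaching_le_sub_one_and_le i
  omega

lemma exists_isBoxAddition_right_iff (lam : PartitionSeq) (i : ℤ) :
    (∃ mu, IsBoxAddition i lam mu) ↔
      lam.rowsReaching (i - 1) = lam.rowsReaching i + 1 ∧
        lam.rowsReaching (i + 1) = lam.rowsReaching i := by
  refine ⟨fun ⟨_, h⟩ => h.rowsReaching_steps.1, fun ⟨hprev, hnext⟩ => ?_⟩
  -- the new box ends row `k = E_λ(i)`
  set k := lam.rowsReaching i
  have h1 := lam.lt_rowsReaching_iff i k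
  have h2 := lam.lt_rowsReaching_iff (i - 1) k
  have h3 := lam.lt_rowsReaching_iff (i + 1) (k - 1)
  have hk : (lam.part k : ℤ) = k + i := by omega
  obtain ⟨mu, hmu⟩ := lam.exists_part_eq_update (k := k) (n := lam.part k + 1)
    (by have := lam.mono k; omega) (fun _ => by omega)
  exact ⟨mu, isBoxAddition_iff.2 ⟨k, hk, hmu⟩⟩

lemma exists_isBoxAddition_left_iff (mu : PartitionSeq) (i : ℤ) :
    (∃ lam, IsBoxAddition i lam mu) ↔
      mu.rowsReaching (i - 1) = mu.rowsReaching i ∧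
        mu.rowsReaching (i + 1) + 1 = mu.rowsReaching i := by
  refine ⟨fun ⟨_, h⟩ => h.rowsReaching_steps.2, fun ⟨hprev, hnext⟩ => ?_⟩
  -- the removed box ends row `k = E_μ(i) - 1`
  obtain ⟨k, hk⟩ : ∃ k, mu.rowsReaching i = k + 1 := ⟨_, hnext.symm⟩
  have h1 := mu.lt_rowsReaching_iff i k
  have h2 := mu.lt_rowsReaching_iff (i + 1) k
  have h3 := mu.lt_rowsReaching_iff (i - 1) (k + 1)
  obtain ⟨lam, hlam⟩ := mu.exists_part_eq_update (k := k) (n := mu.part k - 1)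
    (by push_cast at h3; omega) (fun _ => by have := mu.part_antitone (k.sub_le 1); omega)
  refine ⟨lam, isBoxAddition_iff.2 ⟨k, by rw [hlam, update_self]; omega, ?_⟩⟩
  rw [hlam, update_idem, update_self, Nat.sub_add_cancel (by omega), update_eq_self]

lemma IsBoxAddition.exists_common_source {i j : ℤ} (hij : i ≠ j) {lam mu sigma : PartitionSeq}
    (hj : IsBoxAddition j lam mu) (hi : IsBoxAddition i sigma mu) :
    ∃ nu, IsBoxAddition i nu lam ∧ IsBoxAddition j nu sigma := by
  have hmu := (exists_isBoxAddition_left_iff mu i).1 ⟨sigma, hi⟩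
  have hlam := (exists_isBoxAddition_right_iff lam j).1 ⟨mu, hj⟩
  have sj := hj.rowsReaching_eq
  have si := hi.rowsReaching_eq
  have := lam.rowsReaching_add_one_le_and_le i
  have := lam.rowsReaching_le_sub_one_and_le i
  obtain ⟨nu, hi'⟩ := (exists_isBoxAddition_left_iff lam i).2 <| by
    have := sj (i - 1); have := sj i; have := sj (i + 1)
    split_ifs at * <;> omega
  have si' := hi'.rowsReaching_eq
  obtain ⟨sigma', hj'⟩ := (exists_isBoxAddition_right_iff nu j).2 <| by
    have := si' (j - 1); have := si' j; have := si' (j + 1)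
    have := sj (i - 1); have := sj i; have := sj (i + 1)
    split_ifs at * <;> omega
  have sj' := hj'.rowsReaching_eq
  obtain rfl : sigma' = sigma := rowsReaching_injective <| funext fun l => by
    have := sj l; have := si l; have := si' l; have := sj' l
    split_ifs at * <;> omega
  exact ⟨nu, hi', hj'⟩

lemma IsBoxAddition.exists_common_target {i j : ℤ} (hij : i ≠ j) {lam nu sigma : PartitionSeq}
    (hi : IsBoxAddition i nu lam) (hj : IsBoxAddition j nu sigma) :
    ∃ mu, IsBoxAddition j lam mu ∧ IsBoxAddition i sigma mu := by
  have hnu := (exists_isBoxAddition_right_iff nu j).1 ⟨sigma, hj⟩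
  have hlam := (exists_isBoxAddition_left_iff lam i).1 ⟨nu, hi⟩
  have si := hi.rowsReaching_eq
  have sj := hj.rowsReaching_eq
  have := lam.rowsReaching_add_one_le_and_le j
  have := lam.rowsReaching_le_sub_one_and_le j
  obtain ⟨mu, hj'⟩ := (exists_isBoxAddition_right_iff lam j).2 <| by
    have := si (j - 1); have := si j; have := si (j + 1)
    split_ifs at * <;> omega
  have sj' := hj'.rowsReaching_eq
  obtain ⟨sigma', hi'⟩ := (exists_isBoxAddition_left_iff mu i).2 <| by
    have := sj' (i - 1); have := sj' i; have := sj' (i + 1)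
    have := si (j - 1); have := si j; have := si (j + 1)
    split_ifs at * <;> omega
  have si' := hi'.rowsReaching_eq
  obtain rfl : sigma' = sigma := rowsReaching_injective <| funext fun l => by
    have := si l; have := sj l; have := sj' l; have := si' l
    split_ifs at * <;> omega
  exact ⟨mu, hj', hi'⟩

namespace PartitionSeq

/-- The pairing of the weight `Λ₀ - Σₖ vₖ(λ) αₖ` of `λ` with the coroot `αᵢ^∨`. -/
noncomputable def weight (lam : PartitionSeq) (i : ℤ) : ℤ :=
  (if i = 0 then 1 else 0) - 2 * (boxCount lam i : ℤ) + (boxCount lam (i - 1) : ℤ) +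
    (boxCount lam (i + 1) : ℤ)

lemma weight_eq (lam : PartitionSeq) (i : ℤ) :
    lam.weight i =
      lam.rowsReaching (i - 1) + lam.rowsReaching (i + 1) - 2 * lam.rowsReaching i := by
  have := lam.boxCount_add_toNat_neg (i - 1)
  have := lam.boxCount_add_toNat_neg i
  have := lam.boxCount_add_toNat_neg (i + 1)
  unfold weight
  split_ifs <;> omega

open Classical in
lemma weight_eq_ite (lam : PartitionSeq) (i : ℤ) :
    lam.weight i = (if ∃ mu, IsBoxAddition i lam mu then 1 else 0) -
      (if ∃ nu, IsBoxAddition i nu lam then 1 else 0) := by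
  rw [weight_eq, exists_isBoxAddition_right_iff, exists_isBoxAddition_left_iff]
  have := lam.rowsReaching_add_one_le_and_le i
  have := lam.rowsReaching_le_sub_one_and_le i
  split_ifs <;> omega

end PartitionSeq

lemma IsBoxAddition.weight_sub {j : ℤ} {lam mu : PartitionSeq} (h : IsBoxAddition j lam mu)
    (i : ℤ) : mu.weight i - lam.weight i = -cartanAInf i j := by
  have := h.rowsReaching_eq (i - 1)
  have := h.rowsReaching_eq i
  have := h.rowsReaching_eq (i + 1)
  rw [weight_eq, weight_eq, cartanAInf]
  split_ifs at * <;> omega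

lemma fOp_eq_relOp (i : ℤ) : fOp i = relOp ℂ (IsBoxAddition i) := rfl

lemma eOp_eq_relOp (i : ℤ) : eOp i = relOp ℂ (flip (IsBoxAddition i)) := by
  have hremove : (fun lam nu : PartitionSeq => ∃ b : ℕ × ℕ,
      boxResidue b = i ∧ b ∈ lam.diagram ∧ nu.diagram = lam.diagram \ {b}) =
      flip (IsBoxAddition i) := by
    funext lam nu
    refine propext <| exists_congr fun b => and_congr_right fun _ => ?_
    constructor
    · rintro ⟨hb, hnu⟩
      rw [hnu]
      exact ⟨fun h => h.2 rfl, (Set.sdiff_union_of_subset (Set.singleton_subset_iff.2 hb)).symm⟩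
    · rintro ⟨hb, hlam⟩
      rw [hlam]
      exact ⟨Or.inr rfl, by simp [hb]⟩
  rw [← hremove]
  rfl

lemma hOp_eq_diagOp (i : ℤ) : hOp i = diagOp fun lam => ((lam.weight i : ℤ) : ℂ) := rfl

lemma eOp_comp_fOp_sub_self (i : ℤ) : eOp i ∘ₗ fOp i - fOp i ∘ₗ eOp i = hOp i := by
  rw [eOp_eq_relOp, fOp_eq_relOp, hOp_eq_diagOp,
    relOp_flip_comp_sub_comp_flip (isBoxAddition_leftUnique i) (isBoxAddition_rightUnique i)]
  congr 1
  funext lam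
  rw [lam.weight_eq_ite]
  push_cast
  rfl

lemma eOp_comp_fOp_comm {i j : ℤ} (hij : i ≠ j) : eOp i ∘ₗ fOp j = fOp j ∘ₗ eOp i := by
  have hdiamond : Relation.Comp (IsBoxAddition j) (flip (IsBoxAddition i)) =
      Relation.Comp (flip (IsBoxAddition i)) (IsBoxAddition j) :=
    funext fun _ => funext fun _ => propext ⟨fun ⟨_, hj, hi⟩ => hj.exists_common_source hij hi,
      fun ⟨_, hi, hj⟩ => hi.exists_common_target hij hj⟩
  rw [eOp_eq_relOp, fOp_eq_relOp,
    relOp_comp_relOp (isBoxAddition_rightUnique j) (isBoxAddition_leftUnique i).flip,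
    relOp_comp_relOp (isBoxAddition_leftUnique i).flip (isBoxAddition_rightUnique j),
    hdiamond]

lemma hOp_comp_eOp_sub (i j : ℤ) :
    hOp i ∘ₗ eOp j - eOp j ∘ₗ hOp i = ((cartanAInf i j : ℤ) : ℂ) • eOp j := by
  rw [hOp_eq_diagOp, eOp_eq_relOp]
  refine diagOp_comp_relOp_sub (isBoxAddition_leftUnique j).flip fun mu lam h => ?_
  have := h.weight_sub i
  exact_mod_cast (by omega : lam.weight i - mu.weight i = cartanAInf i j)

lemma hOp_comp_fOp_sub (i j : ℤ) :
    hOp i ∘ₗ fOp j - fOp j ∘ₗ hOp i = -((cartanAInf i j : ℤ) : ℂ) • fOp j := by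
  rw [hOp_eq_diagOp, fOp_eq_relOp]
  refine diagOp_comp_relOp_sub (isBoxAddition_rightUnique j) fun lam mu h => ?_
  exact_mod_cast h.weight_sub i

/-- the box-addition, box-removal and diagonal operators on the free vector
space on partitions satisfy the Chevalley relations of `sl_∞`:
`[e_i, f_j] = δ_{ij} h_i`, `[h_i, e_j] = C_{ij} e_j`, `[h_i, f_j] = −C_{ij} f_j`. -/
theorem chevalley_relations (i j : ℤ) :
    (eOp i ∘ₗ fOp j - fOp j ∘ₗ eOp i = if i = j then hOp i else 0) ∧
    (hOp i ∘ₗ eOp j - eOp j ∘ₗ hOp i = ((cartanAInf i j : ℤ) : ℂ) • eOp j) ∧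
    (hOp i ∘ₗ fOp j - fOp j ∘ₗ hOp i = -(((cartanAInf i j : ℤ) : ℂ)) • fOp j) := by
  refine ⟨?_, hOp_comp_eOp_sub i j, hOp_comp_fOp_sub i j⟩
  split_ifs with hij
  · subst hij
    exact eOp_comp_fOp_sub_self i
  · exact sub_eq_zero_of_eq (eOp_comp_fOp_comm hij)
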